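/- arXiv:1906.08539 — 5 statements merged into one kernel-verified Lean document; each statement's English description precedes it below -/
import Mathlib

section
/- Let K1, K2, t1, t2 be positive integers with t1 < K1, t2 < K2 and t1·K2 ≥ t2·K1, and set c = ⌈t2·(K1−t1)/(K2−t2)⌉ (so c ≤ t1). Then, as rational numbers, ( c·(K2−t2)·C(K1,t1)·C(K2,t2) + (t1−c)·t2·C(K1,t1)·C(K2,t2+1) ) / ( t1·t2·C(K1,t1)·C(K2,t2) ) ≤ (K1−t1)/((t2+1)·t1) + (K2−t2)·(t1·t2+t2+1)/((t2+1)·t1·t2). -/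
/-- quantitative content of Theorem 1 in the case `M1 ≥ M2`
(`t1·K2 ≥ t2·K1`): the exact rate of the CSM scheme is bounded by the
closed-form expression. -/
theorem csm_rate_bound_M1_ge_M2 (K1 K2 t1 t2 : ℕ) (c : ℤ)
    (ht1 : 0 < t1) (ht2 : 0 < t2) (h1 : t1 < K1) (h2 : t2 < K2)
    (h3 : t2 * K1 ≤ t1 * K2)
    (hc : c = ⌈((t2 : ℚ) * ((K1 : ℚ) - (t1 : ℚ))) / ((K2 : ℚ) - (t2 : ℚ))⌉) :
    ((c : ℚ) * ((K2 : ℚ) - (t2 : ℚ)) * (Nat.choose K1 t1 : ℚ) * (Nat.choose K2 t2 : ℚ)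
        + ((t1 : ℚ) - (c : ℚ)) * (t2 : ℚ) * (Nat.choose K1 t1 : ℚ)
          * (Nat.choose K2 (t2 + 1) : ℚ))
      / ((t1 : ℚ) * (t2 : ℚ) * (Nat.choose K1 t1 : ℚ) * (Nat.choose K2 t2 : ℚ))
    ≤ ((K1 : ℚ) - (t1 : ℚ)) / (((t2 : ℚ) + 1) * (t1 : ℚ))
      + ((K2 : ℚ) - (t2 : ℚ)) * ((t1 : ℚ) * (t2 : ℚ) + (t2 : ℚ) + 1)
        / (((t2 : ℚ) + 1) * (t1 : ℚ) * (t2 : ℚ)) := by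
  have hK2 : (t2 : ℚ) < K2 := by exact_mod_cast h2
  have hK1 : (t1 : ℚ) < K1 := by exact_mod_cast h1
  have hden : (0 : ℚ) < (K2 : ℚ) - t2 := by linarith
  have ht1q : (0 : ℚ) < t1 := by exact_mod_cast ht1
  have ht2q : (0 : ℚ) < t2 := by exact_mod_cast ht2
  have hb1 : (0 : ℚ) < (Nat.choose K1 t1 : ℚ) := by
    exact_mod_cast Nat.choose_pos h1.le
  have hb2 : (0 : ℚ) < (Nat.choose K2 t2 : ℚ) := by
    exact_mod_cast Nat.choose_pos h2.le
  have hd : (0 : ℚ) < ((t2 : ℚ) + 1) * t1 * t2 := by positivity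
  -- choose identity
  have hch : (Nat.choose K2 (t2 + 1) : ℚ) * ((t2 : ℚ) + 1)
      = (Nat.choose K2 t2 : ℚ) * ((K2 : ℚ) - t2) := by
    have h' := congrArg (fun n : ℕ => (n : ℚ)) (Nat.choose_succ_right_eq K2 t2)
    push_cast [Nat.cast_sub h2.le] at h'
    linarith [h']
  have hb : (Nat.choose K2 (t2 + 1) : ℚ)
      = (Nat.choose K2 t2 : ℚ) * ((K2 : ℚ) - t2) / ((t2 : ℚ) + 1) := by
    field_simp
    linarith [hch]
  -- ceiling bound
  have hceil : (c : ℚ) < ((t2 : ℚ) * ((K1 : ℚ) - t1)) / ((K2 : ℚ) - t2) + 1 := by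
    rw [hc]; exact Int.ceil_lt_add_one _
  have hcb : (c : ℚ) * ((K2 : ℚ) - t2) ≤ (t2 : ℚ) * ((K1 : ℚ) - t1) + ((K2 : ℚ) - t2) := by
    have hlt : (c : ℚ) - 1 < ((t2 : ℚ) * ((K1 : ℚ) - t1)) / ((K2 : ℚ) - t2) := by linarith
    rw [lt_div_iff₀ hden] at hlt
    nlinarith
  have hkey : ((K2 : ℚ) - t2) * ((c : ℚ) + (t1 : ℚ) * t2)
      ≤ (t2 : ℚ) * ((K1 : ℚ) - t1) + ((K2 : ℚ) - t2) * ((t1 : ℚ) * t2 + t2 + 1) := by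
    nlinarith [mul_pos hden ht2q]
  have hL : ((c : ℚ) * ((K2 : ℚ) - (t2 : ℚ)) * (Nat.choose K1 t1 : ℚ) * (Nat.choose K2 t2 : ℚ)
        + ((t1 : ℚ) - (c : ℚ)) * (t2 : ℚ) * (Nat.choose K1 t1 : ℚ)
          * (Nat.choose K2 (t2 + 1) : ℚ))
      / ((t1 : ℚ) * (t2 : ℚ) * (Nat.choose K1 t1 : ℚ) * (Nat.choose K2 t2 : ℚ))
      = ((K2 : ℚ) - t2) * ((c : ℚ) + (t1 : ℚ) * t2) / (((t2 : ℚ) + 1) * t1 * t2) := by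
    rw [hb]
    field_simp
    ring
  have hR : ((K1 : ℚ) - (t1 : ℚ)) / (((t2 : ℚ) + 1) * (t1 : ℚ))
      + ((K2 : ℚ) - (t2 : ℚ)) * ((t1 : ℚ) * (t2 : ℚ) + (t2 : ℚ) + 1)
        / (((t2 : ℚ) + 1) * (t1 : ℚ) * (t2 : ℚ))
      = ((t2 : ℚ) * ((K1 : ℚ) - t1) + ((K2 : ℚ) - t2) * ((t1 : ℚ) * t2 + t2 + 1))
        / (((t2 : ℚ) + 1) * t1 * t2) := by
    field_simp
  rw [hL, hR, div_le_div_iff₀ hd hd]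
  nlinarith [mul_le_mul_of_nonneg_right hkey hd.le]
end

section
/- Let K1, K2, t1, t2 be positive integers with t1 < K1, t2 < K2 and t1·K2 < t2·K1, and set c = ⌈t1·(K2−t2)/(K1−t1)⌉ (so c ≤ t2). Then, as rational numbers, ( c·(K1−t1)·C(K1,t1)·C(K2,t2) + (t2−c)·t1·C(K1,t1+1)·C(K2,t2) ) / ( t1·t2·C(K1,t1)·C(K2,t2) ) ≤ (K2−t2)/((t1+1)·t2) + (K1−t1)·(t1·t2+t1+1)/((t1+1)·t1·t2). -/
/-- quantitative content of Theorem 1 in the case `M1 < M2`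
(`t1·K2 < t2·K1`): the exact rate of the CSM scheme (roles of the two groups
exchanged) is bounded by the closed-form expression. -/
theorem csm_rate_bound_M1_lt_M2 (K1 K2 t1 t2 : ℕ) (c : ℤ)
    (ht1 : 0 < t1) (ht2 : 0 < t2) (h1 : t1 < K1) (h2 : t2 < K2)
    (h3 : t1 * K2 < t2 * K1)
    (hc : c = ⌈((t1 : ℚ) * ((K2 : ℚ) - (t2 : ℚ))) / ((K1 : ℚ) - (t1 : ℚ))⌉) :
    ((c : ℚ) * ((K1 : ℚ) - (t1 : ℚ)) * (Nat.choose K1 t1 : ℚ) * (Nat.choose K2 t2 : ℚ)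
        + ((t2 : ℚ) - (c : ℚ)) * (t1 : ℚ) * (Nat.choose K1 (t1 + 1) : ℚ)
          * (Nat.choose K2 t2 : ℚ))
      / ((t1 : ℚ) * (t2 : ℚ) * (Nat.choose K1 t1 : ℚ) * (Nat.choose K2 t2 : ℚ))
    ≤ ((K2 : ℚ) - (t2 : ℚ)) / (((t1 : ℚ) + 1) * (t2 : ℚ))
      + ((K1 : ℚ) - (t1 : ℚ)) * ((t1 : ℚ) * (t2 : ℚ) + (t1 : ℚ) + 1)
        / (((t1 : ℚ) + 1) * (t1 : ℚ) * (t2 : ℚ)) := by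
  have ht1Q : (0:ℚ) < (t1:ℚ) := by exact_mod_cast ht1
  have ht2Q : (0:ℚ) < (t2:ℚ) := by exact_mod_cast ht2
  have hK1t1 : (0:ℚ) < (K1:ℚ) - (t1:ℚ) := by
    have : (t1:ℚ) < (K1:ℚ) := by exact_mod_cast h1
    linarith
  have hA : (0:ℚ) < (Nat.choose K1 t1 : ℚ) := by
    exact_mod_cast Nat.choose_pos h1.le
  have hB : (0:ℚ) < (Nat.choose K2 t2 : ℚ) := by
    exact_mod_cast Nat.choose_pos h2.le
  -- identity: C(K1,t1+1)*(t1+1) = C(K1,t1)*(K1-t1)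
  have hid : (Nat.choose K1 (t1+1) : ℚ) * ((t1:ℚ)+1)
      = (Nat.choose K1 t1 : ℚ) * ((K1:ℚ) - (t1:ℚ)) := by
    have h := Nat.choose_succ_right_eq K1 t1
    have hsub : ((K1 - t1 : ℕ) : ℚ) = (K1:ℚ) - (t1:ℚ) := by
      push_cast [Nat.cast_sub h1.le]; ring
    calc (Nat.choose K1 (t1+1) : ℚ) * ((t1:ℚ)+1)
        = ((Nat.choose K1 (t1+1) * (t1+1) : ℕ) : ℚ) := by push_cast; ring
      _ = ((Nat.choose K1 t1 * (K1 - t1) : ℕ) : ℚ) := by rw [h]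
      _ = (Nat.choose K1 t1 : ℚ) * ((K1:ℚ) - (t1:ℚ)) := by push_cast [hsub]; ring
  have hCs : (Nat.choose K1 (t1+1) : ℚ)
      = (Nat.choose K1 t1 : ℚ) * ((K1:ℚ) - (t1:ℚ)) / ((t1:ℚ)+1) := by
    field_simp
    linarith [hid]
  -- ceiling bound
  have hceil : (c:ℚ) < ((t1 : ℚ) * ((K2 : ℚ) - (t2 : ℚ))) / ((K1 : ℚ) - (t1 : ℚ)) + 1 := by
    rw [hc]; exact Int.ceil_lt_add_one _
  have hc' : (c:ℚ) * ((K1:ℚ) - (t1:ℚ))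
      ≤ (t1:ℚ) * ((K2:ℚ) - (t2:ℚ)) + ((K1:ℚ) - (t1:ℚ)) := by
    have h4 : ((t1 : ℚ) * ((K2 : ℚ) - (t2 : ℚ))) / ((K1 : ℚ) - (t1 : ℚ)) * ((K1:ℚ) - (t1:ℚ))
        = (t1:ℚ) * ((K2:ℚ) - (t2:ℚ)) := div_mul_cancel₀ _ hK1t1.ne'
    nlinarith [mul_lt_mul_of_pos_right hceil hK1t1]
  have hden : (0:ℚ) < ((t1:ℚ)+1) * (t1:ℚ) * (t2:ℚ) := by positivity
  have hLHS : ((c : ℚ) * ((K1 : ℚ) - (t1 : ℚ)) * (Nat.choose K1 t1 : ℚ) * (Nat.choose K2 t2 : ℚ)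
        + ((t2 : ℚ) - (c : ℚ)) * (t1 : ℚ) * (Nat.choose K1 (t1 + 1) : ℚ)
          * (Nat.choose K2 t2 : ℚ))
      / ((t1 : ℚ) * (t2 : ℚ) * (Nat.choose K1 t1 : ℚ) * (Nat.choose K2 t2 : ℚ))
      = ((K1:ℚ) - (t1:ℚ)) * ((c:ℚ) + (t1:ℚ)*(t2:ℚ)) / (((t1:ℚ)+1) * (t1:ℚ) * (t2:ℚ)) := by
    rw [hCs]
    field_simp
    ring
  rw [hLHS]
  have hRHS : ((K2 : ℚ) - (t2 : ℚ)) / (((t1 : ℚ) + 1) * (t2 : ℚ))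
      + ((K1 : ℚ) - (t1 : ℚ)) * ((t1 : ℚ) * (t2 : ℚ) + (t1 : ℚ) + 1)
        / (((t1 : ℚ) + 1) * (t1 : ℚ) * (t2 : ℚ))
      = ((t1:ℚ) * ((K2:ℚ) - (t2:ℚ)) + ((K1:ℚ) - (t1:ℚ)) * ((t1:ℚ)*(t2:ℚ) + (t1:ℚ) + 1))
        / (((t1:ℚ)+1) * (t1:ℚ) * (t2:ℚ)) := by
    field_simp
  rw [hRHS, div_le_div_iff_of_pos_right hden]
  nlinarith [hc', mul_pos hK1t1 ht1Q]
end

section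
/- Fix positive integers K1, K2, t1, t2 with t1 < K1, t2 < K2 and t1·K2 ≥ t2·K1, and let L = ⌈t2·(K1−t1)/(K2−t2)⌉. In the bipartite graph G' = (X, Y'; E') defined in the context, there exists a matching saturating X, i.e., an injective map f : X → Y' sending every vertex of X to a vertex of Y' adjacent to it. -/
/-- A vertex of the part `𝒳` of the bipartite graph `G' = (𝒳, 𝒴'; E')`:
a tuple `(S1, B, l2, m1)` with `S1` a `(t1+1)`-subset of `Fin K1`,
`B` a `t2`-subset of `Fin K2`, `0 ≤ l2 < t2` and `0 ≤ m1 ≤ t1`. -/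
structure XVert (K1 K2 t1 t2 : ℕ) where
  S1 : Finset (Fin K1)
  hS1 : S1.card = t1 + 1
  B : Finset (Fin K2)
  hB : B.card = t2
  l2 : Fin t2
  m1 : Fin (t1 + 1)

/-- A vertex of the part `𝒴'` of the bipartite graph `G' = (𝒳, 𝒴'; E')`:
a tuple `(A, S2, m2, l1)` with `A` a `t1`-subset of `Fin K1`,
`S2` a `(t2+1)`-subset of `Fin K2`, `0 ≤ m2 ≤ t2` and `0 ≤ l1 < L`. -/
structure YVert (K1 K2 t1 t2 L : ℕ) where
  A : Finset (Fin K1)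
  hA : A.card = t1
  S2 : Finset (Fin K2)
  hS2 : S2.card = t2 + 1
  m2 : Fin (t2 + 1)
  l1 : Fin L

/-- Adjacency in `G'`: `(S1, B, l2, m1)` is adjacent to `(A, S2, m2, l1)` iff
`A` is `S1` with its `m1`-th smallest element removed and `B` is `S2` with its
`m2`-th smallest element removed. -/
def Adj {K1 K2 t1 t2 L : ℕ} (x : XVert K1 K2 t1 t2) (y : YVert K1 K2 t1 t2 L) : Prop :=
  y.A = x.S1.erase ((x.S1.orderIsoOfFin x.hS1 x.m1 : Fin K1))
  ∧ x.B = y.S2.erase ((y.S2.orderIsoOfFin y.hS2 y.m2 : Fin K2))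

namespace Prop2Aux

open Finset

lemma oio_coe_congr {α : Type*} [LinearOrder α] {s s' : Finset α} {n : ℕ}
    (h : s = s') (hs : s.card = n) (hs' : s'.card = n) {i i' : Fin n} (hi : i = i') :
    (s.orderIsoOfFin hs i : α) = (s'.orderIsoOfFin hs' i' : α) := by
  subst h; subst hi; rfl

lemma oio_coe_inj {α : Type*} [LinearOrder α] {s s' : Finset α} {n : ℕ}
    (h : s = s') (hs : s.card = n) (hs' : s'.card = n) {i i' : Fin n}
    (hii : (s.orderIsoOfFin hs i : α) = (s'.orderIsoOfFin hs' i' : α)) : i = i' := by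
  subst h
  exact (s.orderIsoOfFin hs).injective (Subtype.ext hii)

variable {K1 K2 t1 t2 L : ℕ}

noncomputable def aElt (x : XVert K1 K2 t1 t2) : Fin K1 :=
  (x.S1.orderIsoOfFin x.hS1 x.m1 : Fin K1)

lemma aElt_mem (x : XVert K1 K2 t1 t2) : aElt x ∈ x.S1 :=
  (x.S1.orderIsoOfFin x.hS1 x.m1).2

noncomputable def Aset (x : XVert K1 K2 t1 t2) : Finset (Fin K1) :=
  x.S1.erase (aElt x)

lemma Aset_card (x : XVert K1 K2 t1 t2) : (Aset x).card = t1 := by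
  rw [Aset, card_erase_of_mem (aElt_mem x), x.hS1]; rfl

lemma Asetc_card (x : XVert K1 K2 t1 t2) : (Aset x)ᶜ.card = K1 - t1 := by
  rw [card_compl, Aset_card, Fintype.card_fin]

lemma aElt_mem_compl (x : XVert K1 K2 t1 t2) : aElt x ∈ (Aset x)ᶜ := by
  simp [Aset]

noncomputable def iIdx (x : XVert K1 K2 t1 t2) : Fin (K1 - t1) :=
  ((Aset x)ᶜ.orderIsoOfFin (Asetc_card x)).symm ⟨aElt x, aElt_mem_compl x⟩

noncomputable def nVal (x : XVert K1 K2 t1 t2) : ℕ := (iIdx x : ℕ) * t2 + (x.l2 : ℕ)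

lemma nVal_lt (x : XVert K1 K2 t1 t2) : nVal x < (K1 - t1) * t2 := by
  have h1 : (iIdx x : ℕ) < K1 - t1 := (iIdx x).isLt
  have h2 : (x.l2 : ℕ) < t2 := x.l2.isLt
  calc (iIdx x : ℕ) * t2 + (x.l2 : ℕ) < ((iIdx x : ℕ) + 1) * t2 := by
        rw [add_mul, one_mul]; omega
    _ ≤ (K1 - t1) * t2 := Nat.mul_le_mul_right _ (by omega)

lemma Bc_card (x : XVert K1 K2 t1 t2) : x.Bᶜ.card = K2 - t2 := by
  rw [card_compl, x.hB, Fintype.card_fin]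

noncomputable def jIdx (h2 : t2 < K2) (x : XVert K1 K2 t1 t2) : Fin (K2 - t2) :=
  ⟨nVal x % (K2 - t2), Nat.mod_lt _ (by omega)⟩

noncomputable def cElt (h2 : t2 < K2) (x : XVert K1 K2 t1 t2) : Fin K2 :=
  (x.Bᶜ.orderIsoOfFin (Bc_card x) (jIdx h2 x) : Fin K2)

lemma cElt_notMem (h2 : t2 < K2) (x : XVert K1 K2 t1 t2) : cElt h2 x ∉ x.B := by
  have hm := (x.Bᶜ.orderIsoOfFin (Bc_card x) (jIdx h2 x)).2
  exact Finset.mem_compl.mp hm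

noncomputable def S2set (h2 : t2 < K2) (x : XVert K1 K2 t1 t2) : Finset (Fin K2) :=
  insert (cElt h2 x) x.B

lemma S2set_card (h2 : t2 < K2) (x : XVert K1 K2 t1 t2) : (S2set h2 x).card = t2 + 1 := by
  rw [S2set, card_insert_of_notMem (cElt_notMem h2 x), x.hB]

noncomputable def fmap (h2 : t2 < K2) (hLK : (K1 - t1) * t2 ≤ (K2 - t2) * L)
    (x : XVert K1 K2 t1 t2) : YVert K1 K2 t1 t2 L where
  A := Aset x
  hA := Aset_card x
  S2 := S2set h2 x
  hS2 := S2set_card h2 x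
  m2 := ((S2set h2 x).orderIsoOfFin (S2set_card h2 x)).symm
    ⟨cElt h2 x, mem_insert_self _ _⟩
  l1 := ⟨nVal x / (K2 - t2), Nat.div_lt_of_lt_mul ((nVal_lt x).trans_le hLK)⟩

lemma cElt_eq (h2 : t2 < K2) (hLK : (K1 - t1) * t2 ≤ (K2 - t2) * L)
    (x : XVert K1 K2 t1 t2) :
    ((S2set h2 x).orderIsoOfFin (S2set_card h2 x) ((fmap h2 hLK (L := L) x).m2) : Fin K2)
      = cElt h2 x := by
  simp [fmap]

lemma aElt_eq' (x : XVert K1 K2 t1 t2) :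
    ((Aset x)ᶜ.orderIsoOfFin (Asetc_card x) (iIdx x) : Fin K1) = aElt x := by
  simp [iIdx]

lemma fmap_adj (h2 : t2 < K2) (hLK : (K1 - t1) * t2 ≤ (K2 - t2) * L)
    (x : XVert K1 K2 t1 t2) : Adj x (fmap h2 hLK (L := L) x) := by
  constructor
  · rfl
  · show x.B = (S2set h2 x).erase _
    have h := cElt_eq h2 hLK (L := L) x
    rw [show ((fmap h2 hLK (L := L) x).S2.orderIsoOfFin (fmap h2 hLK (L := L) x).hS2
        (fmap h2 hLK (L := L) x).m2 : Fin K2)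
      = ((S2set h2 x).orderIsoOfFin (S2set_card h2 x) ((fmap h2 hLK (L := L) x).m2) : Fin K2)
      from rfl, h]
    rw [S2set, erase_insert (cElt_notMem h2 x)]

lemma fmap_inj (ht2 : 0 < t2) (h1 : t1 < K1) (h2 : t2 < K2)
    (hLK : (K1 - t1) * t2 ≤ (K2 - t2) * L) :
    Function.Injective (fmap h2 hLK (L := L) (K1 := K1) (t1 := t1)) := by
  intro x x' h
  have hA : Aset x = Aset x' := congrArg YVert.A h
  have hS2 : S2set h2 x = S2set h2 x' := congrArg YVert.S2 h
  have hm2 : (fmap h2 hLK (L := L) x).m2 = (fmap h2 hLK (L := L) x').m2 :=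
    congrArg YVert.m2 h
  have hl1 : ((fmap h2 hLK (L := L) x).l1 : ℕ) = ((fmap h2 hLK (L := L) x').l1 : ℕ) := by
    rw [h]
  have hc : cElt h2 x = cElt h2 x' := by
    rw [← cElt_eq h2 hLK (L := L) x, ← cElt_eq h2 hLK (L := L) x']
    exact oio_coe_congr hS2 _ _ hm2
  have hB : x.B = x'.B := by
    have h5 : (S2set h2 x).erase (cElt h2 x) = (S2set h2 x').erase (cElt h2 x') := by
      rw [hS2, hc]
    rwa [S2set, S2set, erase_insert (cElt_notMem h2 x),
      erase_insert (cElt_notMem h2 x')] at h5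
  have hj : jIdx h2 x = jIdx h2 x' := by
    refine oio_coe_inj (congrArg compl hB) (Bc_card x) (Bc_card x') ?_
    exact hc
  have hjv : nVal x % (K2 - t2) = nVal x' % (K2 - t2) := congrArg Fin.val hj
  have hdiv : nVal x / (K2 - t2) = nVal x' / (K2 - t2) := hl1
  have hn : nVal x = nVal x' := by
    rw [← Nat.div_add_mod (nVal x) (K2 - t2), ← Nat.div_add_mod (nVal x') (K2 - t2),
      hdiv, hjv]
  have hl2v : (x.l2 : ℕ) = nVal x % t2 := by
    rw [nVal, mul_comm, Nat.mul_add_mod, Nat.mod_eq_of_lt x.l2.isLt]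
  have hl2v' : (x'.l2 : ℕ) = nVal x' % t2 := by
    rw [nVal, mul_comm, Nat.mul_add_mod, Nat.mod_eq_of_lt x'.l2.isLt]
  have hl2 : x.l2 = x'.l2 := by
    apply Fin.ext; rw [hl2v, hl2v', hn]
  have hiv : (iIdx x : ℕ) = nVal x / t2 := by
    rw [nVal, mul_comm, Nat.mul_add_div ht2, Nat.div_eq_of_lt x.l2.isLt, add_zero]
  have hiv' : (iIdx x' : ℕ) = nVal x' / t2 := by
    rw [nVal, mul_comm, Nat.mul_add_div ht2, Nat.div_eq_of_lt x'.l2.isLt, add_zero]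
  have hi : iIdx x = iIdx x' := by
    apply Fin.ext; rw [hiv, hiv', hn]
  have ha : aElt x = aElt x' := by
    rw [← aElt_eq' x, ← aElt_eq' x']
    exact oio_coe_congr (congrArg compl hA) _ _ hi
  have hS1 : x.S1 = x'.S1 := by
    have h6 : insert (aElt x) (Aset x) = insert (aElt x') (Aset x') := by rw [hA, ha]
    rwa [Aset, Aset, insert_erase (aElt_mem x), insert_erase (aElt_mem x')] at h6
  have hm1 : x.m1 = x'.m1 := by
    refine oio_coe_inj hS1 x.hS1 x'.hS1 ?_
    show aElt x = aElt x'
    exact ha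
  obtain ⟨S1, hS1p, B, hBp, l2, m1⟩ := x
  obtain ⟨S1', hS1p', B', hBp', l2', m1'⟩ := x'
  simp only at hS1 hB hl2 hm1
  subst hS1; subst hB; subst hl2; subst hm1
  rfl

end Prop2Aux

/-- Proposition 2: for `L = ⌈t2(K1−t1)/(K2−t2)⌉` and `t1·K2 ≥ t2·K1`,
the bipartite graph `G'` admits a matching saturating `𝒳`. -/
theorem exists_saturating_matching (K1 K2 t1 t2 L : ℕ)
    (ht1 : 0 < t1) (ht2 : 0 < t2) (h1 : t1 < K1) (h2 : t2 < K2)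
    (h3 : t2 * K1 ≤ t1 * K2)
    (hL : (L : ℤ) = ⌈((t2 : ℚ) * ((K1 : ℚ) - (t1 : ℚ))) / ((K2 : ℚ) - (t2 : ℚ))⌉) :
    ∃ f : XVert K1 K2 t1 t2 → YVert K1 K2 t1 t2 L,
      Function.Injective f ∧ ∀ x, Adj x (f x) := by
  have hpos : (0 : ℚ) < (K2 : ℚ) - t2 := by
    have : (t2 : ℚ) < K2 := by exact_mod_cast h2
    linarith
  have hq : ((t2 : ℚ) * ((K1 : ℚ) - t1)) / ((K2 : ℚ) - t2) ≤ (L : ℚ) := by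
    have hceil := Int.le_ceil (((t2 : ℚ) * ((K1 : ℚ) - t1)) / ((K2 : ℚ) - t2))
    rw [← hL] at hceil
    exact_mod_cast hceil
  have h4 : (t2 : ℚ) * ((K1 : ℚ) - t1) ≤ (L : ℚ) * ((K2 : ℚ) - t2) := by
    rw [div_le_iff₀ hpos] at hq
    exact hq
  have hLK : (K1 - t1) * t2 ≤ (K2 - t2) * L := by
    qify [h1.le, h2.le]
    nlinarith [h4]
  exact ⟨Prop2Aux.fmap h2 hLK, Prop2Aux.fmap_inj ht2 h1 h2 hLK, Prop2Aux.fmap_adj h2 hLK⟩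
end

section
/- Let λ1, λ2 be reals with 0 < λ1 ≤ λ2 < 1 and let K1, K2 be positive integers satisfying 1/(K2λ2) + 2/(K1λ1) < 1. Then R < 2·R_D, where R = (1/λ1 − 1)·(1/(K2λ2) + 1/(K1λ1 + 1)) + (1/λ2 − 1)·(1 − 1/(K1λ1 + 1)) and R_D = (1/λ1 − 1)·(1 − (1−λ1)^{K1}) + (1−λ1)^{K1}·(1/λ2 − 1)·(1 − (1−λ2)^{K2}). -/
/-!
With `c = 1/λ1 - 1`, `d = 1/λ2 - 1`, `u = 1/(K1λ1 + 1)` and `b = 1/(K2λ2)`, the CSM rate is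
`c(b + u) + d(1 - u) ≤ c(b + 1)` because `d ≤ c`. The hypothesis gives `b + 2u < 1`, so this is
less than `2c(1 - u)`. Bernoulli's inequality gives `(1 - λ1)^K1 ≤ u`, hence `2c(1 - u)` is at
most twice the first term of the benchmark rate, and the second term is nonnegative.
-/

/-- Bernoulli's inequality in the form `(1 - x)^n ≤ 1/(1 + n x)`, cleared of denominators. -/
theorem one_sub_pow_mul_one_add_mul_le_one {R : Type*} [CommRing R] [LinearOrder R]
    [IsStrictOrderedRing R] {x : R} (hx₀ : -1 ≤ x) (hx₁ : x ≤ 1) (n : ℕ) :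
    (1 - x) ^ n * (1 + n * x) ≤ 1 :=
  calc (1 - x) ^ n * (1 + n * x)
      ≤ (1 - x) ^ n * (1 + x) ^ n :=
        mul_le_mul_of_nonneg_left (one_add_mul_le_pow (by linarith) n)
          (pow_nonneg (by linarith) n)
    _ = (1 - x ^ 2) ^ n := by rw [← mul_pow]; ring
    _ ≤ 1 := pow_le_one₀ (by nlinarith) (by nlinarith)

theorem csm_lt_two_benchmark_general (l1 l2 : ℝ) (K1 K2 : ℕ)
    (h01 : 0 < l1) (h12 : l1 ≤ l2) (h21 : l2 < 1) (hK1 : 0 < K1)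
    (hcond : 1 / ((K2 : ℝ) * l2) + 2 / ((K1 : ℝ) * l1) < 1) :
    (1 / l1 - 1) * (1 / ((K2 : ℝ) * l2) + 1 / ((K1 : ℝ) * l1 + 1))
        + (1 / l2 - 1) * (1 - 1 / ((K1 : ℝ) * l1 + 1))
      < 2 * ((1 / l1 - 1) * (1 - (1 - l1) ^ K1)
          + (1 - l1) ^ K1 * (1 / l2 - 1) * (1 - (1 - l2) ^ K2)) := by
  have h02 : 0 < l2 := h01.trans_le h12
  have ha : 0 < (K1 : ℝ) * l1 := mul_pos (by exact_mod_cast hK1) h01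
  set b := 1 / ((K2 : ℝ) * l2)
  set u := 1 / ((K1 : ℝ) * l1 + 1)
  have hc : 0 < 1 / l1 - 1 := by linarith [one_lt_one_div h01 (h12.trans_lt h21)]
  have hd : 0 ≤ 1 / l2 - 1 := by linarith [one_le_one_div h02 h21.le]
  have hdc : 1 / l2 - 1 ≤ 1 / l1 - 1 := by linarith [one_div_le_one_div_of_le h01 h12]
  have hu : u ≤ 1 := (div_le_one (by linarith)).2 (by linarith)
  have hbu : b + 1 < 2 * (1 - u) := by
    have hua : u < 1 / ((K1 : ℝ) * l1) := one_div_lt_one_div_of_lt ha (lt_add_one _)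
    linarith [mul_one_div (2 : ℝ) ((K1 : ℝ) * l1)]
  have hpu : (1 - l1) ^ K1 ≤ u := by
    rw [le_div_iff₀ (by linarith), add_comm]
    exact one_sub_pow_mul_one_add_mul_le_one (by linarith) (by linarith) K1
  have hq : 0 ≤ (1 - l1) ^ K1 * (1 / l2 - 1) * (1 - (1 - l2) ^ K2) :=
    mul_nonneg (mul_nonneg (pow_nonneg (by linarith) K1) hd)
      (by linarith [pow_le_one₀ (n := K2) (by linarith : 0 ≤ 1 - l2) (by linarith)])
  calc (1 / l1 - 1) * (b + u) + (1 / l2 - 1) * (1 - u)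
      ≤ (1 / l1 - 1) * (b + 1) := by nlinarith
    _ < (1 / l1 - 1) * (2 * (1 - u)) := mul_lt_mul_of_pos_left hbu hc
    _ ≤ 2 * ((1 / l1 - 1) * (1 - (1 - l1) ^ K1)) := by nlinarith
    _ ≤ _ := by linarith

/-- order-optimality comparison, case `λ1 ≤ λ2` (inequalities (19)):
the CSM rate is less than twice the benchmark rate. -/
theorem csm_lt_two_benchmark (l1 l2 : ℝ) (K1 K2 : ℕ)
    (h01 : 0 < l1) (h12 : l1 ≤ l2) (h21 : l2 < 1) (hK1 : 0 < K1) (hK2 : 0 < K2)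
    (hcond : 1 / ((K2 : ℝ) * l2) + 2 / ((K1 : ℝ) * l1) < 1) :
    (1 / l1 - 1) * (1 / ((K2 : ℝ) * l2) + 1 / ((K1 : ℝ) * l1 + 1))
        + (1 / l2 - 1) * (1 - 1 / ((K1 : ℝ) * l1 + 1))
      < 2 * ((1 / l1 - 1) * (1 - (1 - l1) ^ K1)
          + (1 - l1) ^ K1 * (1 / l2 - 1) * (1 - (1 - l2) ^ K2)) :=
  csm_lt_two_benchmark_general l1 l2 K1 K2 h01 h12 h21 hK1 hcond
end

section
/- Let λ1, λ2 be reals with 0 < λ2 < λ1 < 1 and let K1, K2 be positive integers satisfying 1/(K1λ1) + 2/(K2λ2) < 1. Then R' < 2·R_D', where R' = (1/λ1 − 1)·(1 − 1/(K2λ2 + 1)) + (1/λ2 − 1)·(1/(K1λ1) + 1/(K2λ2 + 1)) and R_D' = (1/λ2 − 1)·(1 − (1−λ2)^{K2}) + (1−λ2)^{K2}·(1/λ1 − 1)·(1 − (1−λ1)^{K1}). -/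
/-- order-optimality comparison, case `λ1 > λ2` (inequality (25)):
the CSM rate is less than twice the benchmark rate. -/
theorem csm_lt_two_benchmark' (l1 l2 : ℝ) (K1 K2 : ℕ)
    (h02 : 0 < l2) (h21 : l2 < l1) (h11 : l1 < 1) (hK1 : 0 < K1) (hK2 : 0 < K2)
    (hcond : 1 / ((K1 : ℝ) * l1) + 2 / ((K2 : ℝ) * l2) < 1) :
    (1 / l1 - 1) * (1 - 1 / ((K2 : ℝ) * l2 + 1))
        + (1 / l2 - 1) * (1 / ((K1 : ℝ) * l1) + 1 / ((K2 : ℝ) * l2 + 1))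
      < 2 * ((1 / l2 - 1) * (1 - (1 - l2) ^ K2)
          + (1 - l2) ^ K2 * (1 / l1 - 1) * (1 - (1 - l1) ^ K1)) := by
  have hl1 : 0 < l1 := lt_trans h02 h21
  have hK1' : (0:ℝ) < K1 := by exact_mod_cast hK1
  have hK2' : (0:ℝ) < K2 := by exact_mod_cast hK2
  set a : ℝ := (K1 : ℝ) * l1 with hadef
  set b : ℝ := (K2 : ℝ) * l2 with hbdef
  set c : ℝ := (1 - l2) ^ K2 with hcdef
  set d : ℝ := (1 - l1) ^ K1 with hddef
  set A : ℝ := 1 / l1 - 1 with hAdef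
  set B : ℝ := 1 / l2 - 1 with hBdef
  have ha0 : 0 < a := mul_pos hK1' hl1
  have hb0 : 0 < b := mul_pos hK2' h02
  have hb1 : 0 < b + 1 := by linarith
  -- A, B positivity and comparison
  have hA0 : 0 < A := by
    have : 1 < 1 / l1 := one_lt_one_div hl1 h11
    simp only [hAdef]; linarith
  have hAB : A < B := by
    have : 1 / l1 < 1 / l2 := one_div_lt_one_div_of_lt h02 h21
    simp only [hAdef, hBdef]; linarith
  have hB0 : 0 < B := lt_trans hA0 hAB
  -- bound c ≤ 1/(b+1)
  have hc0 : 0 ≤ c := pow_nonneg (by linarith) K2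
  have e1 : 1 + b ≤ (1 + l2) ^ K2 := by
    have := one_add_mul_le_pow (a := l2) (by linarith) K2
    simpa [hbdef, mul_comm] using this
  have e2 : (1 + l2) ^ K2 * c ≤ 1 := by
    rw [hcdef, ← mul_pow]
    exact pow_le_one₀ (by nlinarith) (by nlinarith)
  have hc : c ≤ 1 / (b + 1) := by
    rw [le_div_iff₀ hb1]
    calc c * (b + 1) ≤ c * (1 + l2) ^ K2 := by
          apply mul_le_mul_of_nonneg_left _ hc0; linarith
      _ ≤ 1 := by linarith [e2]
  -- d bounds
  have hd1 : d ≤ 1 := pow_le_one₀ (by linarith) (by linarith)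
  -- consequences of hcond
  have hkey : 1 * b + a * 2 < a * b := by
    rw [div_add_div _ _ (ne_of_gt ha0) (ne_of_gt hb0),
      div_lt_one (mul_pos ha0 hb0)] at hcond
    exact hcond
  have ha1 : 1 < a := by
    have h2b : 0 < 2 / b := by positivity
    have : 1 / a < 1 := by linarith
    exact (div_lt_one ha0).mp this
  have hstep3 : 1 / a + 2 * (1 / (b + 1)) < 1 := by
    have h1 : 2 / (b + 1) < 2 / b := by
      apply div_lt_div_of_pos_left (by norm_num) hb0; linarith
    rw [div_eq_mul_one_div 2 (b+1), div_eq_mul_one_div 2 b] at h1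
    rw [div_eq_mul_one_div 2 b] at hcond
    linarith
  have hcoef : 0 < 1 - 1 / (b + 1) := by
    have : 1 / (b + 1) < 1 := by rw [div_lt_one hb1]; linarith
    linarith
  have hextra : 0 ≤ c * A * (1 - d) :=
    mul_nonneg (mul_nonneg hc0 hA0.le) (by linarith)
  calc A * (1 - 1 / (b + 1)) + B * (1 / a + 1 / (b + 1))
      < B * (1 - 1 / (b + 1)) + B * (1 / a + 1 / (b + 1)) := by
        have := mul_lt_mul_of_pos_right hAB hcoef; linarith
    _ = B * (1 + 1 / a) := by ring
    _ < B * (2 * (1 - 1 / (b + 1))) := by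
        apply mul_lt_mul_of_pos_left _ hB0; linarith
    _ ≤ B * (2 * (1 - c)) := by
        apply mul_le_mul_of_nonneg_left _ hB0.le
        linarith
    _ ≤ 2 * (B * (1 - c) + c * A * (1 - d)) := by linarith
end
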